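/- arXiv:2605.01960 — 6 statements merged into one kernel-verified Lean document; each statement's English description precedes it below -/
import Mathlib

section
/- Let Y ~ NHG(S, G, T) be the number of good items drawn before the T-th bad item when drawing without replacement from a population of S items with G good and B = S - G bad items (B ≥ T), and let L = Y + T. Then for any integer k with 1 ≤ k < T, E[(T-1)_k / (L-1)_k] = (B)_k / (S)_k, where (x)_k = x(x-1)···(x-k+1) is the falling factorial. -/
/-!
Since `(T-1)_k · C(g+T-1, g) = (g+T-1)_k · C(g+T-1-k, g)`, each weighted term collapses to
`C(g+T-1-k, g) · C(S-T-g, G-g) / C(S, G)`. The sum of the numerators is the normalisation of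
`NHG(S-k, G, T-k)`, i.e. `C(S-k, G)`, by the coefficient identity
`(1-X)^(-a-1) · (1-X)^(-b-1) = (1-X)^(-a-b-2)`; and `C(S-k, G) / C(S, G) = (B)_k / (S)_k` by the
first identity again.
-/

open Finset

/-- The probability mass function of the negative hypergeometric distribution
`NHG(S, G, T)`. -/
noncomputable def nhgWeight (S G T g : ℕ) : ℝ :=
  (Nat.choose (g + T - 1) g * Nat.choose (S - T - g) (G - g) : ℝ) / (Nat.choose S G : ℝ)

theorem Nat.descFactorial_mul_add_choose (m g k : ℕ) :
    m.descFactorial k * (m + g).choose g = (m + g).descFactorial k * (m + g - k).choose g := by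
  rcases lt_or_ge m k with hmk | hkm
  · rcases g.eq_zero_or_pos with rfl | hg
    · simp [Nat.descFactorial_eq_zero_iff_lt.mpr hmk]
    · simp [Nat.descFactorial_eq_zero_iff_lt.mpr hmk,
        Nat.choose_eq_zero_of_lt (by omega : m + g - k < g)]
  have h₁ := Nat.choose_mul (n := m + g) (Nat.le_add_right g k)
  have h₂ := Nat.choose_mul (n := m + g) (Nat.le_add_left k g)
  simp only [Nat.add_sub_cancel, Nat.add_sub_cancel_left] at h₁ h₂
  rw [Nat.choose_symm_add] at h₁
  rw [Nat.descFactorial_eq_factorial_mul_choose, Nat.descFactorial_eq_factorial_mul_choose,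
    mul_assoc, mul_assoc, mul_comm (m.choose k), ← h₁, h₂]

open PowerSeries in
theorem Nat.sum_antidiagonal_add_choose_mul_add_choose (a b n : ℕ) :
    ∑ p ∈ antidiagonal n, (a + p.1).choose a * (b + p.2).choose b
      = (a + b + 1 + n).choose (a + b + 1) := by
  have h := congrArg (coeff (R := ℤ) n ∘ Units.val) (invOneSubPow_add ℤ (a + 1) (b + 1))
  simp only [Function.comp_apply, Units.val_mul, coeff_mul, invOneSubPow_val_succ_eq_mk_add_choose,
    coeff_mk, show a + 1 + (b + 1) = (a + b + 1) + 1 by omega] at h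
  exact_mod_cast h.symm

theorem Nat.cast_descFactorial_div_descFactorial_add {K : Type*} [Field K] [CharZero K]
    {m k : ℕ} (g : ℕ) (hk : k ≤ m) :
    (m.descFactorial k : K) / (m + g).descFactorial k
      = ((m + g - k).choose g : K) / (m + g).choose g := by
  have hdesc : ((m + g).descFactorial k : K) ≠ 0 := by
    exact_mod_cast (Nat.descFactorial_pos.mpr (by omega)).ne'
  have hchoose : ((m + g).choose g : K) ≠ 0 := by
    exact_mod_cast (Nat.choose_pos (Nat.le_add_left g m)).ne'
  rw [div_eq_div_iff hdesc hchoose]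
  exact_mod_cast (Nat.descFactorial_mul_add_choose m g k).trans (mul_comm _ _)

theorem descFactorial_div_mul_nhgWeight {B G T k g : ℕ} (hTB : T ≤ B) (hkT : k < T)
    (hgG : g ≤ G) :
    ((T - 1).descFactorial k : ℝ) / (g + T - 1).descFactorial k * nhgWeight (B + G) G T g
      = ((T - 1 - k + g).choose (T - 1 - k) * (B - T + (G - g)).choose (B - T) : ℕ)
        / (B + G).choose G := by
  have e₁ : (T - 1 - k + g).choose (T - 1 - k) = (T - 1 + g - k).choose g := by
    rw [Nat.choose_symm_add, show T - 1 - k + g = T - 1 + g - k by omega]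
  have e₂ : (B - T + (G - g)).choose (B - T) = (B + G - T - g).choose (G - g) := by
    rw [Nat.choose_symm_add, show B - T + (G - g) = B + G - T - g by omega]
  have hchoose : ((T - 1 + g).choose g : ℝ) ≠ 0 := by
    exact_mod_cast (Nat.choose_pos (Nat.le_add_left g _)).ne'
  rw [nhgWeight, show g + T - 1 = T - 1 + g by omega,
    Nat.cast_descFactorial_div_descFactorial_add g (by omega : k ≤ T - 1), e₁, e₂]
  push_cast
  field_simp

theorem nhg_inverse_factorial_moment_general (S B G T k : ℕ) (hG : G = S - B) (hBS : B ≤ S)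
    (hTB : T ≤ B) (hkT : k < T) :
    ∑ g ∈ Finset.range (G + 1),
        ((Nat.descFactorial (T - 1) k : ℝ) / (Nat.descFactorial (g + T - 1) k : ℝ))
          * nhgWeight S G T g
      = (Nat.descFactorial B k : ℝ) / (Nat.descFactorial S k : ℝ) := by
  obtain rfl : S = B + G := by omega
  have hvdm := Nat.sum_antidiagonal_add_choose_mul_add_choose (T - 1 - k) (B - T) G
  rw [Finset.Nat.sum_antidiagonal_eq_sum_range_succ_mk] at hvdm
  rw [sum_congr rfl fun g hg ↦
      descFactorial_div_mul_nhgWeight hTB hkT (Nat.lt_succ_iff.mp (mem_range.mp hg)),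
    ← sum_div, ← Nat.cast_sum, hvdm,
    show T - 1 - k + (B - T) + 1 = B - k by omega, Nat.choose_symm_add,
    show B - k + G = B + G - k by omega,
    Nat.cast_descFactorial_div_descFactorial_add G (by omega : k ≤ B)]

/-- **Inverse factorial moments of the negative hypergeometric stopping time.**
With `Y ~ NHG(S, G, T)`, `B = S - G ≥ T`, and `L = Y + T`, for any `1 ≤ k < T`,
`E[(T-1)_k / (L-1)_k] = (B)_k / (S)_k`, where `(x)_k` is the falling factorial. -/
theorem nhg_inverse_factorial_moment (S B G T k : ℕ) (hG : G = S - B) (hBS : B ≤ S)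
    (hTB : T ≤ B) (hk1 : 1 ≤ k) (hkT : k < T) :
    ∑ g ∈ Finset.range (G + 1),
        ((Nat.descFactorial (T - 1) k : ℝ) / (Nat.descFactorial (g + T - 1) k : ℝ))
          * nhgWeight S G T g
      = (Nat.descFactorial B k : ℝ) / (Nat.descFactorial S k : ℝ) :=
  nhg_inverse_factorial_moment_general S B G T k hG hBS hTB hkT
end

section
/- For the base case k = 1 of the inverse factorial moment identity: if Y ~ NHG(S, G, T) with B = S - G ≥ T ≥ 2 and L = Y + T, then E[(T-1)/(L-1)] = B/S. -/
/-!
Multiplying by `(T - 1)/(g + T - 1)` turns the `NHG(S, G, T)` weight at `g` into `B/S` times the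
`NHG(S - 1, G, T - 1)` weight at `g`, because `(T - 1)/(g + T - 1) · C(g + T - 1, g) = C(g + T - 2, g)`
and `C(S - 1, G) = (S - G)/S · C(S, G)`. The claim is thus the normalisation of `NHG(S - 1, G, T - 1)`,
which is the upper-index Vandermonde identity, read off from the power-series identity
`(1 - X)^-(a + 1) · (1 - X)^-(b + 1) = (1 - X)^-(a + b + 2)`.
-/

open Finset

theorem Nat.sum_range_add_choose_mul_add_choose (a b n : ℕ) :
    ∑ i ∈ range (n + 1), (a + i).choose i * (b + (n - i)).choose (n - i)
      = (a + b + 1 + n).choose n := by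
  have h := congrArg (PowerSeries.coeff n)
    (congrArg Units.val (PowerSeries.invOneSubPow_add ℤ (a + 1) (b + 1)))
  rw [Units.val_mul, PowerSeries.coeff_mul, Nat.sum_antidiagonal_eq_sum_range_succ_mk,
    show a + 1 + (b + 1) = (a + b + 1) + 1 by ring] at h
  simp only [PowerSeries.invOneSubPow_val_succ_eq_mk_add_choose, PowerSeries.coeff_mk,
    Nat.choose_symm_add] at h
  norm_cast at h
  rw [h]
  exact sum_congr rfl fun i _ => by rw [Nat.choose_symm_add, Nat.choose_symm_add]

theorem sum_nhgWeight {S G T : ℕ} (hT : 1 ≤ T) (hGTS : G + T ≤ S) :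
    ∑ g ∈ range (G + 1), nhgWeight S G T g = 1 := by
  have hvdm := Nat.sum_range_add_choose_mul_add_choose (T - 1) (S - T - G) G
  rw [show T - 1 + (S - T - G) + 1 + G = S by omega] at hvdm
  have hterm : ∀ g ∈ range (G + 1), (g + T - 1).choose g * (S - T - g).choose (G - g)
      = (T - 1 + g).choose g * (S - T - G + (G - g)).choose (G - g) := by
    intro g hg
    rw [mem_range] at hg
    rw [show g + T - 1 = T - 1 + g by omega, show S - T - g = S - T - G + (G - g) by omega]
  have hS : (S.choose G : ℝ) ≠ 0 := by exact_mod_cast (Nat.choose_pos (by omega)).ne'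
  simp only [nhgWeight, ← sum_div]
  rw [div_eq_one_iff_eq hS]
  exact_mod_cast (sum_congr rfl hterm).trans hvdm

theorem sub_one_div_mul_nhgWeight {S G T : ℕ} (g : ℕ) (hT : 2 ≤ T) (hGS : G < S) :
    ((T : ℝ) - 1) / ((g : ℝ) + T - 1) * nhgWeight S G T g
      = ((S - G : ℕ) : ℝ) / S * nhgWeight (S - 1) G (T - 1) g := by
  have hterm : ((g + T - 2).choose g : ℝ) * ((g : ℝ) + T - 1)
      = (g + T - 1).choose g * ((T : ℝ) - 1) := by
    obtain ⟨t, rfl⟩ : ∃ t, T = t + 2 := ⟨T - 2, by omega⟩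
    have h := Nat.choose_mul_succ_eq (g + t) g
    rw [show g + t + 1 - g = t + 1 by omega] at h
    rw [show g + (t + 2) - 2 = g + t by omega, show g + (t + 2) - 1 = g + t + 1 by omega]
    have h' : ((g + t).choose g : ℝ) * (g + t + 1) = (g + t + 1).choose g * (t + 1) := by
      exact_mod_cast h
    push_cast
    linear_combination h'
  have htotal : ((S - 1).choose G : ℝ) * S = S.choose G * ((S - G : ℕ) : ℝ) := by
    obtain ⟨s, rfl⟩ : ∃ s, S = s + 1 := ⟨S - 1, by omega⟩
    exact_mod_cast Nat.choose_mul_succ_eq s G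
  have hT' : (0 : ℝ) < (g : ℝ) + T - 1 := by
    have : (2 : ℝ) ≤ T := by exact_mod_cast hT
    linarith [(Nat.cast_nonneg g : (0 : ℝ) ≤ g)]
  have hS : (0 : ℝ) < S := by exact_mod_cast (show 0 < S by omega)
  have hC : (0 : ℝ) < S.choose G := by exact_mod_cast Nat.choose_pos hGS.le
  have hC' : (0 : ℝ) < (S - 1).choose G := by exact_mod_cast Nat.choose_pos (by omega)
  rw [nhgWeight, nhgWeight, show g + (T - 1) - 1 = g + T - 2 by omega,
    show S - 1 - (T - 1) - g = S - T - g by omega]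
  field_simp
  linear_combination ((S - T - g).choose (G - g) : ℝ) *
    (((T : ℝ) - 1) * (g + T - 1).choose g * htotal - S.choose G * ((S - G : ℕ) : ℝ) * hterm)

/-- **Base case `k = 1` of the inverse factorial moment identity.** If
`Y ~ NHG(S, G, T)` with `B = S - G ≥ T ≥ 2` and `L = Y + T`, then
`E[(T-1)/(L-1)] = B/S`. -/
theorem nhg_inverse_moment_base (S B G T : ℕ) (hG : G = S - B) (hBS : B ≤ S)
    (hT2 : 2 ≤ T) (hTB : T ≤ B) :
    ∑ g ∈ Finset.range (G + 1),
        (((T : ℝ) - 1) / ((g : ℝ) + (T : ℝ) - 1)) * nhgWeight S G T g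
      = (B : ℝ) / (S : ℝ) := by
  calc ∑ g ∈ range (G + 1), ((T : ℝ) - 1) / ((g : ℝ) + T - 1) * nhgWeight S G T g
      = ∑ g ∈ range (G + 1), ((S - G : ℕ) : ℝ) / S * nhgWeight (S - 1) G (T - 1) g :=
        sum_congr rfl fun g _ => sub_one_div_mul_nhgWeight g hT2 (by omega)
    _ = B / S := by
      rw [← mul_sum, sum_nhgWeight (by omega) (by omega), mul_one, show S - G = B by omega]
end

section
/- For any integers S, G, B = S - G, T with B ≥ T ≥ 2, the identity (1/C(S,G)) · Σ_{g=0}^{G} C(g+T-2, g)·C(S-T-g, G-g) = B/S holds. -/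
open Finset

lemma key_vandermonde (p q : ℕ) : ∀ n : ℕ,
    ∑ g ∈ Finset.range (n + 1), (g + p).choose g * (n - g + q).choose (n - g)
      = (n + p + q + 1).choose n := by
  induction p with
  | zero =>
    intro n
    have h1 : ∑ g ∈ Finset.range (n + 1), (g + 0).choose g * (n - g + q).choose (n - g)
        = ∑ j ∈ Finset.range (n + 1), (j + q).choose j := by
      rw [← Finset.sum_range_reflect]
      apply Finset.sum_congr rfl
      intro j hj
      rw [Finset.mem_range] at hj
      have e1 : n + 1 - 1 - j = n - j := by omega
      have e2 : n - (n - j) = j := by omega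
      rw [e1, e2]
      simp [Nat.choose_self]
    rw [h1]
    have h2 : ∑ j ∈ Finset.range (n + 1), (j + q).choose j
        = ∑ j ∈ Finset.range (n + 1), (j + q).choose q := by
      apply Finset.sum_congr rfl
      intro j _
      exact Nat.choose_symm_add
    rw [h2, Nat.sum_range_add_choose]
    have e3 : n + q + 1 = (q + 1) + n := by omega
    have e4 : n + 0 + q + 1 = (q + 1) + n := by omega
    rw [e3, e4, Nat.choose_symm_add]
  | succ p ihp =>
    intro n
    induction n with
    | zero => simp
    | succ n ihn =>
      rw [Finset.sum_range_succ'] -- splits off g = 0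
      have hsplit : ∀ h ∈ Finset.range (n + 1),
          (h + 1 + (p + 1)).choose (h + 1) * (n + 1 - (h + 1) + q).choose (n + 1 - (h + 1))
            = (h + 1 + p).choose (h + 1) * (n - h + q).choose (n - h)
              + (h + (p + 1)).choose h * (n - h + q).choose (n - h) := by
        intro h _
        have e1 : h + 1 + (p + 1) = (h + 1 + p) + 1 := by omega
        have e2 : n + 1 - (h + 1) = n - h := by omega
        rw [e1, e2, Nat.choose_succ_succ']
        have e3 : h + 1 + p = h + (p + 1) := by omega
        rw [Nat.add_mul, e3]
        ring
      rw [Finset.sum_congr rfl hsplit, Finset.sum_add_distrib]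
      rw [ihn]
      have hL : (∑ h ∈ Finset.range (n + 1),
          (h + 1 + p).choose (h + 1) * (n - h + q).choose (n - h))
            + (0 + (p + 1)).choose 0 * (n + 1 - 0 + q).choose (n + 1 - 0)
          = ∑ g ∈ Finset.range (n + 2), (g + p).choose g * (n + 1 - g + q).choose (n + 1 - g) := by
        conv_rhs => rw [Finset.sum_range_succ' _ (n + 1)]
        congr 1
        · apply Finset.sum_congr rfl
          intro h _
          congr 2 <;> omega
        · simp
      rw [add_right_comm, hL, ihp (n + 1)]
      have pasc := Nat.choose_succ_succ' (n + (p + 1) + q + 1) n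
      have e4 : (n + 1 + p + q + 1).choose (n + 1)
          = (n + (p + 1) + q + 1).choose (n + 1) := by
        rw [show n + 1 + p + q + 1 = n + (p + 1) + q + 1 from by omega]
      have e5 : (n + 1 + (p + 1) + q + 1).choose (n + 1)
          = (n + (p + 1) + q + 1 + 1).choose (n + 1) := by
        rw [show n + 1 + (p + 1) + q + 1 = n + (p + 1) + q + 1 + 1 from by omega]
      omega

/-- **Combinatorial core of the unbiasedness proof.** For integers `S, G`,
`B = S - G`, `T` with `B ≥ T ≥ 2`,
`(1/C(S,G)) · ∑_{g=0}^{G} C(g+T-2, g)·C(S-T-g, G-g) = B/S`. -/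
theorem nhg_core_identity (S B G T : ℕ) (hB : B = S - G) (hGS : G ≤ S)
    (hT2 : 2 ≤ T) (hTB : T ≤ B) :
    (1 / (Nat.choose S G : ℝ)) *
        ∑ g ∈ Finset.range (G + 1),
          ((Nat.choose (g + T - 2) g * Nat.choose (S - T - g) (G - g) : ℕ) : ℝ)
      = (B : ℝ) / (S : ℝ) := by
  have hST : T + G ≤ S := by omega
  have hsum : ∑ g ∈ Finset.range (G + 1),
      (g + T - 2).choose g * (S - T - g).choose (G - g) = (S - 1).choose G := by
    have h := key_vandermonde (T - 2) (S - T - G) G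
    have heq : ∀ g ∈ Finset.range (G + 1),
        (g + T - 2).choose g * (S - T - g).choose (G - g)
          = (g + (T - 2)).choose g * (G - g + (S - T - G)).choose (G - g) := by
      intro g hg
      rw [Finset.mem_range] at hg
      congr 2 <;> omega
    rw [Finset.sum_congr rfl heq, h]
    congr 1
    omega
  rw [← Nat.cast_sum, hsum]
  have hS1 : S - 1 + 1 = S := by omega
  have hkey : (S - 1).choose G * S = S.choose G * (S - G) := by
    have := Nat.choose_mul_succ_eq (S - 1) G
    rwa [hS1] at this
  have hchoose_ne : (S.choose G : ℝ) ≠ 0 := by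
    exact_mod_cast Nat.choose_pos hGS |>.ne'
  have hSne : (S : ℝ) ≠ 0 := by
    have : 0 < S := by omega
    exact_mod_cast this.ne'
  have hkeyR : ((S - 1).choose G : ℝ) * S = S.choose G * (S - G : ℕ) := by
    exact_mod_cast hkey
  rw [Nat.cast_sub hGS] at hkeyR
  rw [hB, Nat.cast_sub hGS]
  field_simp
  linarith [hkeyR]
end

section
/- For any integers S, G, B = S - G, T, k with B ≥ T ≥ 2 and 1 ≤ k+1 < T, the identity (1/C(S,G)) · Σ_{g=0}^{G} C(g+T-k-2, g)·C(S-T-g, G-g) = (B)_{k+1}/(S)_{k+1} holds, where (x)_j denotes the falling factorial. -/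
open Finset

/-- Chu–Vandermonde in diagonal form. -/
lemma aux_vandermonde (r : ℕ) : ∀ (n s : ℕ),
    ∑ g ∈ Finset.range (n + 1), Nat.choose (g + r) g * Nat.choose (n - g + s) (n - g)
      = Nat.choose (n + r + s + 1) n := by
  intro n
  induction n with
  | zero => simp
  | succ n ih =>
    intro s
    induction s with
    | zero =>
      rw [Finset.sum_range_succ]
      have h1 : ∀ g ∈ Finset.range (n + 1),
          Nat.choose (g + r) g * Nat.choose (n + 1 - g + 0) (n + 1 - g)
            = Nat.choose (g + r) g * Nat.choose (n - g + 0) (n - g) := by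
        intro g hg
        simp [Nat.choose_self]
      rw [Finset.sum_congr rfl h1, ih 0]
      simp only [Nat.choose_self, Nat.sub_self, Nat.mul_one]
      have : n + 1 + r + 0 + 1 = (n + r + 0 + 1) + 1 := by omega
      rw [this, Nat.choose_succ_succ (n + r + 0 + 1) n]
      congr 2
      omega
    | succ s ihs =>
      have key : ∀ g ∈ Finset.range (n + 1),
          Nat.choose (g + r) g * Nat.choose (n + 1 - g + (s + 1)) (n + 1 - g)
            = Nat.choose (g + r) g * Nat.choose (n - g + (s + 1)) (n - g)
              + Nat.choose (g + r) g * Nat.choose (n + 1 - g + s) (n + 1 - g) := by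
        intro g hg
        rw [Finset.mem_range] at hg
        have hg' : g ≤ n := by omega
        rw [show n + 1 - g + (s + 1) = (n - g + (s + 1)) + 1 by omega,
          show n + 1 - g = (n - g) + 1 by omega, Nat.choose_succ_succ, Nat.mul_add]
        simp only [Nat.succ_eq_add_one]
        rw [show n - g + (s + 1) = n - g + 1 + s by omega]
      rw [Finset.sum_range_succ, Finset.sum_congr rfl key, Finset.sum_add_distrib]
      rw [ih (s + 1)]
      have hlast : Nat.choose (n + 1 + r) (n + 1) * Nat.choose (n + 1 - (n + 1) + (s + 1)) (n + 1 - (n + 1))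
          = Nat.choose (n + 1 + r) (n + 1) * Nat.choose (n + 1 - (n + 1) + s) (n + 1 - (n + 1)) := by
        simp
      rw [Nat.add_assoc, Nat.add_assoc]
      rw [show Nat.choose (n + 1 + r) (n + 1) * Nat.choose (n + 1 - (n + 1) + (s + 1)) (n + 1 - (n + 1))
          = Nat.choose (n + 1 + r) (n + 1) * Nat.choose (n + 1 - (n + 1) + s) (n + 1 - (n + 1)) from hlast]
      rw [← Finset.sum_range_succ
        (fun g => Nat.choose (g + r) g * Nat.choose (n + 1 - g + s) (n + 1 - g)) (n + 1)]
      rw [ihs]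
      rw [show n + 1 + r + (s + 1) + 1 = (n + r + (s + 1) + 1) + 1 by omega,
        Nat.choose_succ_succ (n + r + (s + 1) + 1) n]
      congr 2
      omega

lemma aux_numeric (S G k : ℕ) (hG : G ≤ S) (hk : k + 1 ≤ S - G) :
    Nat.choose (S - k - 1) G * Nat.descFactorial S (k + 1)
      = Nat.choose S G * Nat.descFactorial (S - G) (k + 1) := by
  have hkS : k + 1 ≤ S := by omega
  apply Nat.eq_of_mul_eq_mul_right (Nat.mul_pos G.factorial_pos (S - G - k - 1).factorial_pos)
  have h1 : Nat.choose (S - k - 1) G * Nat.factorial G * Nat.factorial (S - k - 1 - G)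
      = Nat.factorial (S - k - 1) := Nat.choose_mul_factorial_mul_factorial (by omega)
  have h2 : Nat.factorial (S - (k + 1)) * Nat.descFactorial S (k + 1) = Nat.factorial S :=
    Nat.factorial_mul_descFactorial hkS
  have h3 : Nat.choose S G * Nat.factorial G * Nat.factorial (S - G) = Nat.factorial S :=
    Nat.choose_mul_factorial_mul_factorial hG
  have h4 : Nat.factorial (S - G - (k + 1)) * Nat.descFactorial (S - G) (k + 1)
      = Nat.factorial (S - G) := Nat.factorial_mul_descFactorial hk
  have e1 : S - k - 1 - G = S - G - k - 1 := by omega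
  have e2 : S - (k + 1) = S - k - 1 := by omega
  have e3 : S - G - (k + 1) = S - G - k - 1 := by omega
  calc Nat.choose (S - k - 1) G * Nat.descFactorial S (k + 1)
        * (Nat.factorial G * Nat.factorial (S - G - k - 1))
      = (Nat.choose (S - k - 1) G * Nat.factorial G * Nat.factorial (S - k - 1 - G))
        * Nat.descFactorial S (k + 1) := by rw [e1]; ring
    _ = Nat.factorial S := by rw [h1, ← e2]; exact h2
    _ = Nat.choose S G * Nat.descFactorial (S - G) (k + 1)
        * (Nat.factorial G * Nat.factorial (S - G - k - 1)) := by
        rw [← h3, ← h4, e3]; ring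

/-- **Inductive step identity for inverse factorial moments.** For integers
`S, G, B = S - G, T, k` with `B ≥ T ≥ 2` and `1 ≤ k+1 < T`,
`(1/C(S,G)) · ∑_{g=0}^{G} C(g+T-k-2, g)·C(S-T-g, G-g) = (B)_{k+1}/(S)_{k+1}`,
where `(x)_j` is the falling factorial. -/
theorem nhg_inductive_step_identity (S B G T k : ℕ) (hB : B = S - G) (hGS : G ≤ S)
    (hT2 : 2 ≤ T) (hTB : T ≤ B) (hk : k + 1 < T) :
    (1 / (Nat.choose S G : ℝ)) *
        ∑ g ∈ Finset.range (G + 1),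
          ((Nat.choose (g + T - k - 2) g * Nat.choose (S - T - g) (G - g) : ℕ) : ℝ)
      = (Nat.descFactorial B (k + 1) : ℝ) / (Nat.descFactorial S (k + 1) : ℝ) := by
  subst hB
  have hTG : T + G ≤ S := by omega
  -- rewrite the sum using the Vandermonde identity
  have hsum : ∑ g ∈ Finset.range (G + 1),
      Nat.choose (g + T - k - 2) g * Nat.choose (S - T - g) (G - g)
      = Nat.choose (S - k - 1) G := by
    have := aux_vandermonde (T - k - 2) G (S - T - G)
    have hcongr : ∀ g ∈ Finset.range (G + 1),
        Nat.choose (g + T - k - 2) g * Nat.choose (S - T - g) (G - g)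
          = Nat.choose (g + (T - k - 2)) g * Nat.choose (G - g + (S - T - G)) (G - g) := by
      intro g hg
      rw [Finset.mem_range] at hg
      congr 2 <;> omega
    rw [Finset.sum_congr rfl hcongr, this]
    congr 1
    omega
  rw [show (∑ g ∈ Finset.range (G + 1),
      ((Nat.choose (g + T - k - 2) g * Nat.choose (S - T - g) (G - g) : ℕ) : ℝ))
      = ((Nat.choose (S - k - 1) G : ℕ) : ℝ) from by rw [← Nat.cast_sum, hsum]]
  have hnum := aux_numeric S G k hGS (by omega)
  have hS0 : (Nat.choose S G : ℝ) ≠ 0 :=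
    Nat.cast_ne_zero.mpr (Nat.choose_pos hGS).ne'
  have hd0 : (Nat.descFactorial S (k + 1) : ℝ) ≠ 0 := by
    have : Nat.descFactorial S (k + 1) ≠ 0 := fun h =>
      absurd (Nat.descFactorial_eq_zero_iff_lt.mp h) (by omega)
    exact_mod_cast this
  rw [one_div, inv_mul_eq_div, div_eq_div_iff hS0 hd0]
  exact_mod_cast hnum.trans (Nat.mul_comm _ _)
end

section
/- Let Y ~ NHG(S, G, T) with B = S - G ≥ T ≥ 3 and L = Y + T, and let B̂ = S(T-1)/(L-1). Then Var[B̂] < (S(T-1))/((S-1)(T-2)) · B(B-1) - B², provided L is not almost surely constant. -/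
open Finset

lemma hockey0 (a n : ℕ) : ∑ k ∈ range (n+1), Nat.choose k a = Nat.choose (n+1) (a+1) := by
  induction n with
  | zero =>
    rw [Finset.sum_range_one]
    cases a with
    | zero => rfl
    | succ a => simp [Nat.choose_eq_zero_of_lt]
  | succ n ih =>
    rw [sum_range_succ, ih, Nat.choose_succ_succ' (n+1) a]
    omega
lemma hockey (a b n : ℕ) :
    ∑ k ∈ range (n+1), Nat.choose k a * Nat.choose (n-k) b = Nat.choose (n+1) (a+b+1) := by
  induction n generalizing b with
  | zero =>
    rw [Finset.sum_range_one]
    cases a with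
    | zero =>
      cases b with
      | zero => rfl
      | succ b => simp [Nat.choose_eq_zero_of_lt]
    | succ a => simp [Nat.choose_eq_zero_of_lt]
  | succ n ih =>
    cases b with
    | zero =>
      simp only [Nat.choose_zero_right, mul_one]
      simpa using hockey0 a (n+1)
    | succ b =>
      rw [sum_range_succ]
      have h1 : ∀ k ∈ range (n+1),
          Nat.choose k a * Nat.choose (n+1-k) (b+1)
            = Nat.choose k a * Nat.choose (n-k) b + Nat.choose k a * Nat.choose (n-k) (b+1) := by
        intro k hk
        rw [mem_range] at hk
        have h2 : n + 1 - k = (n - k) + 1 := by omega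
        rw [h2]
        simp [Nat.choose_succ_succ, Nat.mul_add]
      rw [sum_congr rfl h1, sum_add_distrib, ih b, ih (b+1)]
      have h3 : Nat.choose (n+1-(n+1)) (b+1) = 0 := by
        simp
      rw [h3, mul_zero, add_zero]
      have e1 : a+(b+1)+1 = (a+b+1)+1 := by omega
      rw [e1, Nat.choose_succ_succ' (n+1) (a+b+1)]
lemma lemB (r D G : ℕ) :
    ∑ g ∈ range (G+1), Nat.choose (g+r) r * Nat.choose (G-g+D) D
      = Nat.choose (G+r+D+1) (r+D+1) := by
  have key := hockey r D (G+r+D)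
  rw [show G+r+D+1 = r + ((G+1) + D) by ring, Finset.sum_range_add,
    Finset.sum_range_add] at key
  have h0 : ∑ k ∈ range r, Nat.choose k r * Nat.choose (G+r+D-k) D = 0 := by
    apply Finset.sum_eq_zero
    intro k hk
    rw [mem_range] at hk
    simp [Nat.choose_eq_zero_of_lt hk]
  have h2 : ∑ k ∈ range D, Nat.choose (r+(G+1+k)) r * Nat.choose (G+r+D-(r+(G+1+k))) D = 0 := by
    apply Finset.sum_eq_zero
    intro k hk
    rw [mem_range] at hk
    have : G+r+D-(r+(G+1+k)) < D := by omega
    simp [Nat.choose_eq_zero_of_lt this]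
  rw [h0, h2, zero_add, add_zero] at key
  rw [show G+r+D+1 = r+(G+1+D) by omega, ← key]
  apply Finset.sum_congr rfl
  intro g hg
  rw [mem_range] at hg
  rw [show r + g = g + r from by ring, show G+r+D-(g+r) = G-g+D from by omega]

lemma natStep (g t : ℕ) (ht : 1 ≤ t) :
    t * Nat.choose (g + t) g = (g + t) * Nat.choose (g + t - 1) g := by
  have h1 : Nat.choose (g+t) g = Nat.choose (g+t) t := by
    rw [← Nat.choose_symm (Nat.le_add_left t g)]
    congr 1
    omega
  have h2 : Nat.choose (g+t-1) g = Nat.choose (g+t-1) (t-1) := by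
    rw [← Nat.choose_symm (show t-1 ≤ g+t-1 by omega)]
    congr 1
    omega
  have h3 := Nat.add_one_mul_choose_eq (g+t-1) (t-1)
  rw [show g+t-1+1 = g+t by omega, show t-1+1 = t by omega] at h3
  rw [h1, h2, h3, mul_comm]

lemma natK (S B G T r : ℕ) (hG : G = S - B) (hBS : B ≤ S) (hTB : T ≤ B)
    (hr1 : 1 ≤ r) (hrT : r ≤ T) :
    ∑ g ∈ range (G+1), Nat.choose (g+r-1) g * Nat.choose (S-T-g) (G-g)
      = Nat.choose (S - (T - r)) G := by
  have hstep : ∀ g ∈ range (G+1),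
      Nat.choose (g+r-1) g * Nat.choose (S-T-g) (G-g)
        = Nat.choose (g+(r-1)) (r-1) * Nat.choose ((G-g)+(B-T)) (B-T) := by
    intro g hg
    rw [mem_range] at hg
    have a1 : g + r - 1 = g + (r-1) := by omega
    have a2 : S - T - g = (G-g) + (B-T) := by omega
    have s1 : Nat.choose (g+(r-1)) g = Nat.choose (g+(r-1)) (r-1) := by
      rw [← Nat.choose_symm (Nat.le_add_left (r-1) g)]
      congr 1
      omega
    have s2 : Nat.choose ((G-g)+(B-T)) (G-g) = Nat.choose ((G-g)+(B-T)) (B-T) := by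
      rw [← Nat.choose_symm (Nat.le_add_left (B-T) (G-g))]
      congr 1
      omega
    rw [a1, a2, s1, s2]
  rw [Finset.sum_congr rfl hstep, lemB (r-1) (B-T) G]
  have e1 : G + (r-1) + (B-T) + 1 = S - (T - r) := by omega
  have e2 : (r-1) + (B-T) + 1 = (S - (T-r)) - G := by omega
  rw [e1, e2, Nat.choose_symm (by omega)]

def q1 (S G T g : ℕ) : ℕ := Nat.choose (g+T-1) g * Nat.choose (S-T-g) (G-g)
def q2 (S G T g : ℕ) : ℕ := Nat.choose (g+(T-1)-1) g * Nat.choose (S-T-g) (G-g)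
def q3 (S G T g : ℕ) : ℕ := Nat.choose (g+(T-2)-1) g * Nat.choose (S-T-g) (G-g)

lemma sum_q1 (S B G T : ℕ) (hG : G = S - B) (hBS : B ≤ S) (hTB : T ≤ B) (hT3 : 3 ≤ T) :
    ∑ g ∈ range (G+1), q1 S G T g = Nat.choose S G := by
  have := natK S B G T T hG hBS hTB (by omega) le_rfl
  rw [show S - (T - T) = S by omega] at this
  simpa [q1] using this

lemma sum_q2 (S B G T : ℕ) (hG : G = S - B) (hBS : B ≤ S) (hTB : T ≤ B) (hT3 : 3 ≤ T) :
    ∑ g ∈ range (G+1), q2 S G T g = Nat.choose (S-1) G := by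
  have := natK S B G T (T-1) hG hBS hTB (by omega) (by omega)
  rw [show S - (T - (T-1)) = S - 1 by omega] at this
  simpa [q2] using this

lemma sum_q3 (S B G T : ℕ) (hG : G = S - B) (hBS : B ≤ S) (hTB : T ≤ B) (hT3 : 3 ≤ T) :
    ∑ g ∈ range (G+1), q3 S G T g = Nat.choose (S-2) G := by
  have := natK S B G T (T-2) hG hBS hTB (by omega) (by omega)
  rw [show S - (T - (T-2)) = S - 2 by omega] at this
  simpa [q3] using this

lemma j2 (S G T g : ℕ) (hT3 : 3 ≤ T) :
    (T-1) * q1 S G T g = (g+T-1) * q2 S G T g := by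
  unfold q1 q2
  have h := natStep g (T-1) (by omega)
  rw [show g+(T-1) = g+T-1 by omega] at h
  calc (T-1) * (Nat.choose (g+T-1) g * Nat.choose (S-T-g) (G-g))
      = ((T-1) * Nat.choose (g+T-1) g) * Nat.choose (S-T-g) (G-g) := by ring
    _ = ((g+T-1) * Nat.choose (g+T-1-1) g) * Nat.choose (S-T-g) (G-g) := by rw [h]
    _ = (g+T-1) * (Nat.choose (g+(T-1)-1) g * Nat.choose (S-T-g) (G-g)) := by
        rw [show g+T-1-1 = g+(T-1)-1 by omega]; ring

lemma j3 (S G T g : ℕ) (hT3 : 3 ≤ T) :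
    (T-1)*(T-2) * q1 S G T g = (g+T-1)*(g+T-2) * q3 S G T g := by
  have h2 := j2 S G T g hT3
  have h : (T-2) * q2 S G T g = (g+T-2) * q3 S G T g := by
    unfold q2 q3
    have h := natStep g (T-2) (by omega)
    rw [show g+(T-2) = g+T-2 by omega] at h
    calc (T-2) * (Nat.choose (g+(T-1)-1) g * Nat.choose (S-T-g) (G-g))
        = ((T-2) * Nat.choose (g+T-2) g) * Nat.choose (S-T-g) (G-g) := by
          rw [show g+(T-1)-1 = g+T-2 by omega]; ring
      _ = ((g+T-2) * Nat.choose (g+T-2-1) g) * Nat.choose (S-T-g) (G-g) := by rw [h]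
      _ = (g+T-2) * (Nat.choose (g+(T-2)-1) g * Nat.choose (S-T-g) (G-g)) := by
          rw [show g+T-2-1 = g+(T-2)-1 by omega]; ring
  calc (T-1)*(T-2) * q1 S G T g = (T-2) * ((T-1) * q1 S G T g) := by ring
    _ = (T-2) * ((g+T-1) * q2 S G T g) := by rw [h2]
    _ = (g+T-1) * ((T-2) * q2 S G T g) := by ring
    _ = (g+T-1) * ((g+T-2) * q3 S G T g) := by rw [h]
    _ = (g+T-1)*(g+T-2) * q3 S G T g := by ring

lemma r2 (S B G : ℕ) (hG : G = S - B) (hBS : B ≤ S) (hB1 : 1 ≤ B) :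
    S * Nat.choose (S-1) G = B * Nat.choose S G := by
  have h := natStep G B hB1
  rw [show G + B = S by omega] at h
  exact h.symm

lemma r3 (S B G : ℕ) (hG : G = S - B) (hBS : B ≤ S) (hB2 : 2 ≤ B) :
    (S*(S-1)) * Nat.choose (S-2) G = (B*(B-1)) * Nat.choose S G := by
  have h2 := r2 S B G hG hBS (by omega)
  have h := natStep G (B-1) (by omega)
  rw [show G + (B-1) = S - 1 by omega, show S-1-1 = S-2 by omega] at h
  calc (S*(S-1)) * Nat.choose (S-2) G = S * ((S-1) * Nat.choose (S-2) G) := by ring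
    _ = S * ((B-1) * Nat.choose (S-1) G) := by rw [← h]
    _ = (B-1) * (S * Nat.choose (S-1) G) := by ring
    _ = (B-1) * (B * Nat.choose S G) := by rw [h2]
    _ = (B*(B-1)) * Nat.choose S G := by ring

/-- **Sharper variance bound for the stopping-time estimator.** With
`Y ~ NHG(S, G, T)`, `B = S - G ≥ T ≥ 3`, `L = Y + T`, and `B̂ = S(T-1)/(L-1)`,
provided `L` is not almost surely constant,
`Var[B̂] < S(T-1)/((S-1)(T-2)) · B(B-1) - B²`. -/
theorem nhg_estimator_variance_bound (S B G T : ℕ) (hG : G = S - B) (hBS : B ≤ S)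
    (hT3 : 3 ≤ T) (hTB : T ≤ B)
    (hnc : ∃ g₁ ∈ Finset.range (G + 1), ∃ g₂ ∈ Finset.range (G + 1),
      g₁ ≠ g₂ ∧ nhgWeight S G T g₁ ≠ 0 ∧ nhgWeight S G T g₂ ≠ 0) :
    (∑ g ∈ Finset.range (G + 1),
        ((S : ℝ) * ((T : ℝ) - 1) / ((g : ℝ) + (T : ℝ) - 1)) ^ 2 * nhgWeight S G T g)
      - (∑ g ∈ Finset.range (G + 1),
          ((S : ℝ) * ((T : ℝ) - 1) / ((g : ℝ) + (T : ℝ) - 1)) * nhgWeight S G T g) ^ 2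
      < (S : ℝ) * ((T : ℝ) - 1) / (((S : ℝ) - 1) * ((T : ℝ) - 2)) * ((B : ℝ) * ((B : ℝ) - 1))
        - (B : ℝ) ^ 2 := by
  have hS3 : 3 ≤ S := le_trans (le_trans hT3 hTB) hBS
  set c0 : ℝ := ((Nat.choose S G : ℕ) : ℝ) with hc0def
  have hc0 : 0 < c0 := by
    have h : 0 < Nat.choose S G := Nat.choose_pos (by omega)
    rw [hc0def]
    exact_mod_cast h
  have hc0ne : c0 ≠ 0 := ne_of_gt hc0
  have hw : ∀ g, nhgWeight S G T g = (q1 S G T g : ℝ) / c0 := by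
    intro g
    simp only [nhgWeight, q1, hc0def]
    push_cast
    ring
  have hTr : (3:ℝ) ≤ (T:ℝ) := by exact_mod_cast hT3
  have hSr : (3:ℝ) ≤ (S:ℝ) := by exact_mod_cast hS3
  -- per-g positivity
  have hx : ∀ g : ℕ, (0:ℝ) < (g:ℝ) + (T:ℝ) - 1 := by
    intro g
    have : (0:ℝ) ≤ (g:ℝ) := Nat.cast_nonneg g
    linarith
  have hy : ∀ g : ℕ, (0:ℝ) < (g:ℝ) + (T:ℝ) - 2 := by
    intro g
    have : (0:ℝ) ≤ (g:ℝ) := Nat.cast_nonneg g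
    linarith
  -- cast identities
  have hj2r : ∀ g : ℕ, ((T:ℝ)-1) * (q1 S G T g : ℝ) = ((g:ℝ)+(T:ℝ)-1) * (q2 S G T g : ℝ) := by
    intro g
    have h := congrArg (Nat.cast : ℕ → ℝ) (j2 S G T g hT3)
    push_cast [Nat.cast_sub (show 1 ≤ T by omega), Nat.cast_sub (show 1 ≤ g+T by omega)] at h
    linarith [h]
  have hj3r : ∀ g : ℕ, ((T:ℝ)-1)*((T:ℝ)-2) * (q1 S G T g : ℝ)
      = ((g:ℝ)+(T:ℝ)-1)*((g:ℝ)+(T:ℝ)-2) * (q3 S G T g : ℝ) := by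
    intro g
    have h := congrArg (Nat.cast : ℕ → ℝ) (j3 S G T g hT3)
    push_cast [Nat.cast_sub (show 1 ≤ T by omega), Nat.cast_sub (show 2 ≤ T by omega),
      Nat.cast_sub (show 1 ≤ g+T by omega), Nat.cast_sub (show 2 ≤ g+T by omega)] at h
    linarith [h]
  have hr2 : (S:ℝ) * ((Nat.choose (S-1) G : ℕ) : ℝ) = (B:ℝ) * c0 := by
    have h := congrArg (Nat.cast : ℕ → ℝ) (r2 S B G hG hBS (by omega))
    push_cast at h
    rw [hc0def]
    linarith [h]
  have hr3 : (S:ℝ) * ((S:ℝ)-1) * ((Nat.choose (S-2) G : ℕ) : ℝ) = (B:ℝ) * ((B:ℝ)-1) * c0 := by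
    have h := congrArg (Nat.cast : ℕ → ℝ) (r3 S B G hG hBS (by omega))
    push_cast [Nat.cast_sub (show 1 ≤ S by omega), Nat.cast_sub (show 1 ≤ B by omega)] at h
    rw [hc0def]
    linarith [h]
  -- first moment
  have hE1 : (∑ g ∈ Finset.range (G + 1),
      ((S : ℝ) * ((T : ℝ) - 1) / ((g : ℝ) + (T : ℝ) - 1)) * nhgWeight S G T g) = (B:ℝ) := by
    have hterm : ∀ g ∈ Finset.range (G+1),
        ((S : ℝ) * ((T : ℝ) - 1) / ((g : ℝ) + (T : ℝ) - 1)) * nhgWeight S G T g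
          = (S:ℝ) * ((q2 S G T g : ℝ) / c0) := by
      intro g _
      rw [hw g]
      have hxg := hx g
      have hxne : ((g:ℝ)+(T:ℝ)-1) ≠ 0 := ne_of_gt hxg
      have key := hj2r g
      calc ((S : ℝ) * ((T : ℝ) - 1) / ((g : ℝ) + (T : ℝ) - 1)) * ((q1 S G T g : ℝ) / c0)
          = ((S:ℝ) * (((T:ℝ)-1) * (q1 S G T g : ℝ))) / (((g:ℝ)+(T:ℝ)-1) * c0) := by
            rw [div_mul_div_comm, mul_assoc]
        _ = ((S:ℝ) * ((((g:ℝ)+(T:ℝ)-1)) * (q2 S G T g : ℝ))) / (((g:ℝ)+(T:ℝ)-1) * c0) := by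
            rw [key]
        _ = (S:ℝ) * ((((g:ℝ)+(T:ℝ)-1)) * (q2 S G T g : ℝ) / (((g:ℝ)+(T:ℝ)-1) * c0)) := by
            rw [mul_div_assoc]
        _ = (S:ℝ) * ((q2 S G T g : ℝ) / c0) := by rw [mul_div_mul_left _ _ hxne]
    rw [Finset.sum_congr rfl hterm, ← Finset.mul_sum, ← Finset.sum_div]
    have hsum : ∑ g ∈ Finset.range (G+1), (q2 S G T g : ℝ) = ((Nat.choose (S-1) G : ℕ) : ℝ) := by
      rw [← Nat.cast_sum]
      exact_mod_cast congrArg (Nat.cast : ℕ → ℝ) (sum_q2 S B G T hG hBS hTB hT3)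
    rw [hsum]
    field_simp
    linarith [hr2]
  -- comparison function
  set F : ℕ → ℝ := fun g => (S:ℝ)^2*((T:ℝ)-1)/((T:ℝ)-2) * ((q3 S G T g : ℝ)/c0) with hF
  have hsumF : ∑ g ∈ Finset.range (G+1), F g
      = (S : ℝ) * ((T : ℝ) - 1) / (((S : ℝ) - 1) * ((T : ℝ) - 2)) * ((B : ℝ) * ((B : ℝ) - 1)) := by
    simp only [hF]
    rw [← Finset.mul_sum, ← Finset.sum_div]
    have hsum : ∑ g ∈ Finset.range (G+1), (q3 S G T g : ℝ) = ((Nat.choose (S-2) G : ℕ) : ℝ) := by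
      rw [← Nat.cast_sum]
      exact_mod_cast congrArg (Nat.cast : ℕ → ℝ) (sum_q3 S B G T hG hBS hTB hT3)
    rw [hsum]
    have hS1 : (S:ℝ) - 1 ≠ 0 := by linarith
    have hT2 : (T:ℝ) - 2 ≠ 0 := by linarith
    have hSne : (S:ℝ) ≠ 0 := by linarith
    have h' : ((Nat.choose (S-2) G : ℕ) : ℝ) = (B:ℝ)*((B:ℝ)-1)*c0/((S:ℝ)*((S:ℝ)-1)) := by
      rw [eq_div_iff (mul_ne_zero hSne hS1)]
      linear_combination hr3
    rw [h']
    field_simp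
  -- pointwise difference formula
  have hdiff : ∀ g : ℕ,
      F g - ((S : ℝ) * ((T : ℝ) - 1) / ((g : ℝ) + (T : ℝ) - 1)) ^ 2 * nhgWeight S G T g
        = (S:ℝ)^2*((T:ℝ)-1)^2 * (q1 S G T g : ℝ)
            / (((g:ℝ)+(T:ℝ)-1)^2 * ((g:ℝ)+(T:ℝ)-2) * c0) := by
    intro g
    rw [hw g]
    simp only [hF]
    have hxg := hx g
    have hyg := hy g
    have h3 := hj3r g
    have hT2 : (T:ℝ) - 2 ≠ 0 := by linarith
    have hxne : ((g:ℝ)+(T:ℝ)-1) ≠ 0 := ne_of_gt hxg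
    have hyne : ((g:ℝ)+(T:ℝ)-2) ≠ 0 := ne_of_gt hyg
    have hq3 : (q3 S G T g : ℝ)
        = ((T:ℝ)-1)*((T:ℝ)-2) * (q1 S G T g : ℝ) / (((g:ℝ)+(T:ℝ)-1)*((g:ℝ)+(T:ℝ)-2)) := by
      field_simp
      linear_combination -h3
    rw [hq3]
    field_simp
    ring
  have hle : ∀ g ∈ Finset.range (G+1),
      ((S : ℝ) * ((T : ℝ) - 1) / ((g : ℝ) + (T : ℝ) - 1)) ^ 2 * nhgWeight S G T g ≤ F g := by
    intro g _
    have := hdiff g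
    have hnum : (0:ℝ) ≤ (S:ℝ)^2*((T:ℝ)-1)^2 * (q1 S G T g : ℝ) := by positivity
    have hden : (0:ℝ) < ((g:ℝ)+(T:ℝ)-1)^2 * ((g:ℝ)+(T:ℝ)-2) * c0 := by
      have hxg := hx g
      have hyg := hy g
      have h1 : (0:ℝ) < ((g:ℝ)+(T:ℝ)-1)^2 := pow_pos hxg 2
      exact mul_pos (mul_pos h1 hyg) hc0
    linarith [div_nonneg hnum (le_of_lt hden)]
  have hstrict : ∃ g ∈ Finset.range (G+1),
      ((S : ℝ) * ((T : ℝ) - 1) / ((g : ℝ) + (T : ℝ) - 1)) ^ 2 * nhgWeight S G T g < F g := by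
    obtain ⟨g₁, hg₁, g₂, hg₂, hne, hw1, hw2⟩ := hnc
    refine ⟨g₁, hg₁, ?_⟩
    have hq1ne : (q1 S G T g₁ : ℝ) ≠ 0 := by
      intro h0
      apply hw1
      rw [hw g₁, h0, zero_div]
    have hq1pos : (0:ℝ) < (q1 S G T g₁ : ℝ) := lt_of_le_of_ne (Nat.cast_nonneg _) (Ne.symm hq1ne)
    have := hdiff g₁
    have hnum : (0:ℝ) < (S:ℝ)^2*((T:ℝ)-1)^2 * (q1 S G T g₁ : ℝ) := by
      have h1 : (0:ℝ) < (S:ℝ)^2 := pow_pos (by linarith) 2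
      have h2 : (0:ℝ) < ((T:ℝ)-1)^2 := pow_pos (by linarith) 2
      exact mul_pos (mul_pos h1 h2) hq1pos
    have hden : (0:ℝ) < ((g₁:ℝ)+(T:ℝ)-1)^2 * ((g₁:ℝ)+(T:ℝ)-2) * c0 := by
      have hxg := hx g₁
      have hyg := hy g₁
      have h1 : (0:ℝ) < ((g₁:ℝ)+(T:ℝ)-1)^2 := pow_pos hxg 2
      exact mul_pos (mul_pos h1 hyg) hc0
    linarith [div_pos hnum hden]
  have hlt := Finset.sum_lt_sum hle hstrict
  rw [hsumF] at hlt
  rw [hE1]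
  linarith [hlt]
end

section
/- Gaussian mechanism privacy: for a function f: D → ℝ^k with L₂-sensitivity Δ₂f, the mechanism A(D) = f(D) + N(0, σ²I_k) is (ε, δ)-differentially private for ε ∈ (0,1) whenever σ ≥ Δ₂f · √(2 ln(1.25/δ))/ε. -/
/-!
Write `a = f d₁`, `b = f d₂`, `r = ‖a - b‖` and `v = σ²`. The two output distributions are products
of Gaussians, and the density of the first with respect to the second is `exp ℓ` with privacy loss
`ℓ y = ⟨a - b, 2y - a - b⟩ / (2v)`. Where `ℓ ≤ ε` the first density is at most `e^ε` times the second;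
under the first distribution `⟨a - b, y⟩` is Gaussian with variance `r²v`, so `{ℓ > ε}` has mass
`P(Z > σε/r - r/(2σ))` for a standard normal `Z`. The calibration of `σ` puts this threshold above
`c - 1/(2c)` with `c = √(2 log (1.25/δ))`, and the tail bound `P(Z > t) ≤ e^{-t²/2}/2` for `t ≥ 0`
then gives at most `1.25 e^{-c²/2} = δ`. A negative threshold forces `δ > 15/16`, where bounding the
standard normal density by `1/√(2π)` suffices.
-/

open MeasureTheory ProbabilityTheory

/-- `(ε, δ)`-differential privacy of a mechanism `M : D → Measure Ω` with respect
to an adjacency relation `adj`. -/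
def DP {D Ω : Type*} [MeasurableSpace Ω] (adj : D → D → Prop)
    (M : D → Measure Ω) (ε δ : ℝ) : Prop :=
  ∀ d₁ d₂, adj d₁ d₂ → ∀ O : Set Ω, MeasurableSet O →
    (M d₁ O).toReal ≤ Real.exp ε * (M d₂ O).toReal + δ

open Set Real
open scoped ENNReal NNReal

theorem MeasureTheory.Measure.pi_withDensity {ι : Type*} [Fintype ι] {α : ι → Type*}
    [∀ i, MeasurableSpace (α i)] (μ : ∀ i, Measure (α i)) [∀ i, IsProbabilityMeasure (μ i)]
    {ρ : ∀ i, α i → ℝ≥0∞} (hρ : ∀ i, Measurable (ρ i))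
    [∀ i, SigmaFinite ((μ i).withDensity (ρ i))] :
    Measure.pi (fun i => (μ i).withDensity (ρ i)) =
      (Measure.pi μ).withDensity (fun x => ∏ i, ρ i (x i)) := by
  refine Measure.pi_eq fun s hs => ?_
  have hind : (univ.pi s).indicator (fun x => ∏ i, ρ i (x i)) =
      fun x => ∏ i, (s i).indicator (ρ i) (x i) := by
    ext x
    by_cases hx : x ∈ univ.pi s
    · simp [indicator_of_mem hx, indicator_of_mem (hx _ (mem_univ _))]
    · obtain ⟨i, hi⟩ : ∃ i, x i ∉ s i := by simpa using hx
      rw [indicator_of_notMem hx, Finset.prod_eq_zero (Finset.mem_univ i) (indicator_of_notMem hi _)]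
  rw [withDensity_apply _ (.univ_pi hs), ← lintegral_indicator (.univ_pi hs), hind,
    lintegral_prod_eq_prod_lintegral_of_indepFun _ _
      (iIndepFun_pi fun i => ((hρ i).indicator (hs i)).aemeasurable)
      fun i => ((hρ i).indicator (hs i)).comp (measurable_pi_apply i)]
  refine Finset.prod_congr rfl fun i _ => ?_
  rw [(measurePreserving_eval μ i).lintegral_comp ((hρ i).indicator (hs i)),
    lintegral_indicator (hs i), withDensity_apply _ (hs i)]

theorem withDensity_apply_le_mul {α : Type*} [MeasurableSpace α] {μ : Measure α}
    {ρ : α → ℝ≥0∞} {c : ℝ≥0∞} {s : Set α} (hs : MeasurableSet s) (hρ : ∀ x ∈ s, ρ x ≤ c) :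
    μ.withDensity ρ s ≤ c * μ s := by
  rw [withDensity_apply _ hs, ← setLIntegral_const]
  exact setLIntegral_mono measurable_const hρ

theorem withDensity_apply_le_mul_add {α : Type*} [MeasurableSpace α] {μ : Measure α}
    {ρ : α → ℝ≥0∞} {c : ℝ≥0∞} {s G : Set α} (hs : MeasurableSet s) (hG : MeasurableSet G)
    (hρ : ∀ x ∈ G, ρ x ≤ c) :
    μ.withDensity ρ s ≤ c * μ s + μ.withDensity ρ Gᶜ :=
  calc μ.withDensity ρ s ≤ μ.withDensity ρ (s ∩ G) + μ.withDensity ρ (s \ G) :=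
        measure_le_inter_add_sdiff _ _ _
    _ ≤ c * μ s + μ.withDensity ρ Gᶜ := by
        gcongr
        · exact (withDensity_apply_le_mul (hs.inter hG) fun x hx => hρ x hx.2).trans
            (by gcongr; exact inter_subset_left)
        · exact sdiff_subset_compl _ _

theorem DP.of_measure_le {D Ω : Type*} [MeasurableSpace Ω] {adj : D → D → Prop}
    {M : D → Measure Ω} [∀ d, IsFiniteMeasure (M d)] {ε δ : ℝ} (hδ : 0 ≤ δ)
    (h : ∀ d₁ d₂, adj d₁ d₂ → ∀ O, MeasurableSet O →
      M d₁ O ≤ ENNReal.ofReal (exp ε) * M d₂ O + ENNReal.ofReal δ) :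
    DP adj M ε δ := by
  intro d₁ d₂ hadj O hO
  have := ENNReal.toReal_mono (by finiteness) (h d₁ d₂ hadj O hO)
  rwa [ENNReal.toReal_add (by finiteness) (by finiteness), ENNReal.toReal_mul,
    ENNReal.toReal_ofReal (exp_pos _).le, ENNReal.toReal_ofReal hδ] at this

theorem gaussianPDFReal_le (μ : ℝ) (v : ℝ≥0) (x : ℝ) :
    gaussianPDFReal μ v x ≤ (√(2 * π * v))⁻¹ :=
  mul_le_of_le_one_right (by positivity)
    (exp_le_one_iff.2 (div_nonpos_of_nonpos_of_nonneg (by nlinarith) (by positivity)))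

theorem gaussianPDFReal_eq_mul_exp (a b : ℝ) (v : ℝ≥0) (x : ℝ) :
    gaussianPDFReal a v x =
      gaussianPDFReal b v x * exp ((a - b) * (2 * x - a - b) / (2 * v)) := by
  rw [gaussianPDFReal, gaussianPDFReal, mul_assoc _ (rexp _), ← exp_add, ← add_div]
  ring_nf

theorem gaussianReal_eq_withDensity (a b : ℝ) {v : ℝ≥0} (hv : v ≠ 0) :
    gaussianReal a v = (gaussianReal b v).withDensity
      fun x => ENNReal.ofReal (exp ((a - b) * (2 * x - a - b) / (2 * v))) := by
  rw [gaussianReal_of_var_ne_zero _ hv, gaussianReal_of_var_ne_zero _ hv,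
    ← withDensity_mul _ (measurable_gaussianPDF _ _) (by fun_prop)]
  congr 1
  ext x
  rw [Pi.mul_apply, gaussianPDF, gaussianPDF, ← ENNReal.ofReal_mul (gaussianPDFReal_nonneg _ _ _),
    gaussianPDFReal_eq_mul_exp a b]

theorem pi_gaussianReal_eq_withDensity {ι : Type*} [Fintype ι] (a b : ι → ℝ) {v : ℝ≥0}
    (hv : v ≠ 0) :
    Measure.pi (fun i => gaussianReal (a i) v) =
      (Measure.pi fun i => gaussianReal (b i) v).withDensity
        fun x => ENNReal.ofReal (exp (∑ i, (a i - b i) * (2 * x i - a i - b i) / (2 * v))) := by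
  simp_rw [funext fun i => gaussianReal_eq_withDensity (a i) (b i) hv]
  rw [Measure.pi_withDensity _ fun i => by fun_prop]
  congr 1
  ext x
  rw [exp_sum, ENNReal.ofReal_prod_of_nonneg fun i _ => (exp_pos _).le]

theorem map_add_pi_gaussianReal {ι : Type*} [Fintype ι] (m : ι → ℝ) (v : ℝ≥0) :
    (Measure.pi fun _ : ι => gaussianReal 0 v).map (fun ν i => m i + ν i) =
      Measure.pi fun i => gaussianReal (m i) v := by
  rw [Measure.pi_map_pi fun i => by fun_prop]
  simp [gaussianReal_map_const_add]

theorem map_sum_pi_gaussianReal {ι : Type*} [Fintype ι] (m : ι → ℝ) (v : ι → ℝ≥0) :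
    (Measure.pi fun i => gaussianReal (m i) (v i)).map (fun x => ∑ i, x i) =
      gaussianReal (∑ i, m i) (∑ i, v i) := by
  refine Measure.ext_of_charFun ?_
  ext t
  simp only [charFun_map_sum_pi_eq_prod, charFun_gaussianReal, Finset.prod_apply, ← Complex.exp_sum]
  push_cast
  rw [Finset.sum_sub_distrib, ← Finset.sum_mul, ← Finset.mul_sum, ← Finset.sum_div, ← Finset.sum_mul]

theorem map_inner_pi_gaussianReal {ι : Type*} [Fintype ι] (m w : ι → ℝ) (v : ℝ≥0) :
    (Measure.pi fun i => gaussianReal (m i) v).map (fun x => ∑ i, w i * x i) =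
      gaussianReal (∑ i, w i * m i) (.mk (∑ i, w i ^ 2) (by positivity) * v) := by
  have h := Measure.pi_map_pi (μ := fun i => gaussianReal (m i) v)
    (f := fun i x => w i * x) fun i => by fun_prop
  simp only [gaussianReal_map_const_mul] at h
  rw [show (fun x : ι → ℝ => ∑ i, w i * x i) = (fun y : ι → ℝ => ∑ i, y i) ∘ fun x i => w i * x i
    from rfl, ← Measure.map_map (by fun_prop) (by fun_prop), h, map_sum_pi_gaussianReal,
    ← Finset.sum_mul]
  congr 2
  ext
  simp

theorem gaussianReal_map_affine (m τ : ℝ) :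
    (gaussianReal 0 1).map (fun z => m + τ * z) = gaussianReal m (.mk (τ ^ 2) (sq_nonneg τ)) := by
  rw [show (fun z => m + τ * z) = (m + ·) ∘ (τ * ·) from rfl, ← Measure.map_map (by fun_prop)
    (by fun_prop), gaussianReal_map_const_mul, gaussianReal_map_const_add, mul_zero, zero_add,
    mul_one]

theorem gaussianReal_Ioi_eq (m T : ℝ) {τ : ℝ} (hτ : 0 < τ) :
    gaussianReal m (.mk (τ ^ 2) (sq_nonneg τ)) (Ioi T) = gaussianReal 0 1 (Ioi ((T - m) / τ)) := by
  rw [← gaussianReal_map_affine, Measure.map_apply (by fun_prop) measurableSet_Ioi]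
  congr 1
  ext z
  simp [div_lt_iff₀' hτ, sub_lt_iff_lt_add']

theorem pi_gaussianReal_preimage_inner_Ioi {ι : Type*} [Fintype ι] (a w : ι → ℝ) {r σ : ℝ}
    {v : ℝ≥0} (T : ℝ) (hr : 0 < r) (hw : ∑ i, w i ^ 2 = r ^ 2) (hσ : 0 < σ)
    (hvσ : (v : ℝ) = σ ^ 2) :
    Measure.pi (fun i => gaussianReal (a i) v) ((fun x => ∑ i, w i * x i) ⁻¹' Ioi T) =
      gaussianReal 0 1 (Ioi ((T - ∑ i, w i * a i) / (r * σ))) := by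
  have hvar : (.mk (∑ i, w i ^ 2) (by positivity) * v : ℝ≥0) = .mk ((r * σ) ^ 2) (sq_nonneg _) := by
    ext
    rw [NNReal.coe_mul, hvσ]
    simp [hw, mul_pow]
  rw [← Measure.map_apply (by fun_prop) measurableSet_Ioi, map_inner_pi_gaussianReal, hvar,
    gaussianReal_Ioi_eq _ _ (by positivity)]

theorem pi_gaussianReal_le_exp_mul_add {ι : Type*} [Fintype ι] (a b : ι → ℝ) {r σ : ℝ}
    {v : ℝ≥0} (ε : ℝ) (hr : 0 < r) (hab : ∑ i, (a i - b i) ^ 2 = r ^ 2) (hσ : 0 < σ)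
    (hvσ : (v : ℝ) = σ ^ 2) {O : Set (ι → ℝ)} (hO : MeasurableSet O) :
    Measure.pi (fun i => gaussianReal (a i) v) O ≤
      ENNReal.ofReal (exp ε) * Measure.pi (fun i => gaussianReal (b i) v) O +
        gaussianReal 0 1 (Ioi (σ * ε / r - r / (2 * σ))) := by
  have hv : v ≠ 0 := by rw [ne_eq, ← NNReal.coe_eq_zero, hvσ]; positivity
  set w := fun i => a i - b i
  set T := σ ^ 2 * ε + ∑ i, w i * ((a i + b i) / 2)
  have hloss : ∀ x : ι → ℝ, ∑ i, (a i - b i) * (2 * x i - a i - b i) / (2 * v) =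
      (∑ i, w i * x i - ∑ i, w i * ((a i + b i) / 2)) / σ ^ 2 := by
    intro x
    rw [hvσ, ← Finset.sum_sub_distrib, Finset.sum_div]
    refine Finset.sum_congr rfl fun i _ => ?_
    field_simp
    ring
  have hgood : MeasurableSet {x : ι → ℝ | ∑ i, w i * x i ≤ T} :=
    measurableSet_le (by fun_prop) measurable_const
  have hbad : {x : ι → ℝ | ∑ i, w i * x i ≤ T}ᶜ = (fun x => ∑ i, w i * x i) ⁻¹' Ioi T := by
    ext x; simp
  have hT : (T - ∑ i, w i * a i) / (r * σ) = σ * ε / r - r / (2 * σ) := by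
    have : ∑ i, w i * ((a i + b i) / 2) - ∑ i, w i * a i = -(r ^ 2 / 2) := by
      rw [← Finset.sum_sub_distrib, ← hab, Finset.sum_div, ← Finset.sum_neg_distrib]
      exact Finset.sum_congr rfl fun i _ => by ring
    rw [show T - ∑ i, w i * a i = σ ^ 2 * ε - r ^ 2 / 2 by linarith]
    field_simp
  calc Measure.pi (fun i => gaussianReal (a i) v) O
      ≤ ENNReal.ofReal (exp ε) * Measure.pi (fun i => gaussianReal (b i) v) O +
          Measure.pi (fun i => gaussianReal (a i) v) {x | ∑ i, w i * x i ≤ T}ᶜ := by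
        rw [pi_gaussianReal_eq_withDensity a b hv]
        refine withDensity_apply_le_mul_add hO hgood fun x hx => ENNReal.ofReal_le_ofReal ?_
        rw [exp_le_exp, hloss, div_le_iff₀ (by positivity)]
        simp only [mem_ofPred_eq, T] at hx
        linarith
    _ = _ := by rw [hbad, pi_gaussianReal_preimage_inner_Ioi a w T hr hab hσ hvσ, hT]

theorem gaussianReal_Ioi_self (μ : ℝ) {v : ℝ≥0} (hv : v ≠ 0) :
    gaussianReal μ v (Ioi μ) = 2⁻¹ := by
  have := nullSingletonClass_gaussianReal (μ := μ) hv
  have hsymm : gaussianReal μ v (Ioi μ) = gaussianReal μ v (Iic μ) := by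
    have hmap : (gaussianReal μ v).map (2 * μ - ·) = gaussianReal μ v := by
      rw [gaussianReal_map_const_sub]; ring_nf
    conv_lhs => rw [← hmap]
    rw [Measure.map_apply (by fun_prop) measurableSet_Ioi, ← measure_congr Iio_ae_eq_Iic]
    congr 1
    ext x
    simp only [mem_preimage, mem_Ioi, mem_Iio]
    constructor <;> intro h <;> linarith
  have h := measure_add_measure_compl (μ := gaussianReal μ v) (measurableSet_Ioi (a := μ))
  rw [compl_Ioi, ← hsymm, measure_univ, ← two_mul] at h
  exact ENNReal.eq_inv_of_mul_eq_one_left (by rwa [mul_comm])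

theorem gaussianReal_Ioi_le_exp {t : ℝ} (ht : 0 ≤ t) :
    gaussianReal 0 1 (Ioi t) ≤ ENNReal.ofReal (exp (-t ^ 2 / 2)) * 2⁻¹ := by
  -- On `(t, ∞)` the density of `N(0, 1)` with respect to `N(t, 1)` is at most `e^{-t²/2}`.
  rw [gaussianReal_eq_withDensity 0 t one_ne_zero, ← gaussianReal_Ioi_self t one_ne_zero]
  refine withDensity_apply_le_mul measurableSet_Ioi fun x hx => ?_
  refine ENNReal.ofReal_le_ofReal (exp_le_exp.2 ?_)
  rw [NNReal.coe_one, mem_Ioi] at *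
  nlinarith

theorem gaussianReal_Ioi_le_of_nonpos {t : ℝ} (ht : t ≤ 0) :
    gaussianReal 0 1 (Ioi t) ≤ ENNReal.ofReal (-t / √(2 * π)) + 2⁻¹ := by
  rw [← Ioc_union_Ioi_eq_Ioi ht, ← gaussianReal_Ioi_self 0 one_ne_zero]
  refine (measure_union_le _ _).trans (add_le_add_left ?_ _)
  calc gaussianReal 0 1 (Ioc t 0) = ∫⁻ x in Ioc t 0, gaussianPDF 0 1 x :=
        gaussianReal_apply 0 one_ne_zero _
    _ ≤ ∫⁻ _ in Ioc t 0, ENNReal.ofReal (√(2 * π))⁻¹ :=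
        setLIntegral_mono measurable_const fun x _ => ENNReal.ofReal_le_ofReal
          (by simpa using gaussianPDFReal_le 0 1 x)
    _ = ENNReal.ofReal (-t / √(2 * π)) := by
        rw [setLIntegral_const, Real.volume_Ioc, ← ENNReal.ofReal_mul (by positivity)]
        ring_nf

theorem exp_half_le : exp (1 / 2) ≤ 5 / 2 := by
  have h : exp (1 / 2) ^ 2 = exp 1 := by rw [← exp_nat_mul]; norm_num
  nlinarith [exp_one_lt_d9, exp_pos (1 / 2)]

theorem one_fifth_lt_log {δ : ℝ} (hδ0 : 0 < δ) (hδ1 : δ < 1) : 1 / 5 < log (1.25 / δ) := by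
  have := one_sub_inv_le_log_of_pos (x := 1.25 / δ) (by positivity)
  rw [inv_div, div_eq_mul_inv] at this
  nlinarith [mul_lt_mul_of_pos_right hδ1 (show (0 : ℝ) < 1.25⁻¹ by norm_num)]

theorem gaussianReal_Ioi_le_of_sub_inv_le {c t : ℝ} (hc0 : 0 < c) (hc : 2 / 5 ≤ c ^ 2)
    (ht : c - 1 / (2 * c) ≤ t) :
    gaussianReal 0 1 (Ioi t) ≤ ENNReal.ofReal (5 / 4 * exp (-c ^ 2 / 2)) := by
  have hinv : (2⁻¹ : ℝ≥0∞) = ENNReal.ofReal 2⁻¹ := by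
    rw [ENNReal.ofReal_inv_of_pos two_pos, ENNReal.ofReal_ofNat]
  rcases le_or_gt 0 t with ht0 | ht0
  · refine (gaussianReal_Ioi_le_exp ht0).trans ?_
    rw [hinv, ← ENNReal.ofReal_mul (exp_pos _).le]
    refine ENNReal.ofReal_le_ofReal ?_
    have hsq : c ^ 2 - 1 ≤ t ^ 2 := by
      rcases le_or_gt (c ^ 2) 1 with hc1 | hc1
      · nlinarith
      have hpos : 0 ≤ c - 1 / (2 * c) := by
        rw [sub_nonneg, div_le_iff₀ (by positivity)]; nlinarith
      have hsq' : (c - 1 / (2 * c)) ^ 2 = c ^ 2 - 1 + (1 / (2 * c)) ^ 2 := by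
        field_simp; ring
      nlinarith [pow_le_pow_left₀ hpos ht 2]
    calc exp (-t ^ 2 / 2) * 2⁻¹ ≤ exp (1 / 2 + -c ^ 2 / 2) * 2⁻¹ := by gcongr; linarith
      _ = exp (1 / 2) * exp (-c ^ 2 / 2) / 2 := by rw [exp_add]; ring
      _ ≤ 5 / 4 * exp (-c ^ 2 / 2) := by nlinarith [exp_pos (-c ^ 2 / 2), exp_half_le]
  -- Here `2c² < 1` forces `δ ≥ 15/16`, while `c ≥ 5/8` keeps the tail below `1/2 + 1/10`.
  · refine (gaussianReal_Ioi_le_of_nonpos ht0.le).trans ?_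
    rw [hinv, ← ENNReal.ofReal_add (div_nonneg (by linarith) (by positivity)) (by norm_num)]
    refine ENNReal.ofReal_le_ofReal ?_
    have hπ : 2 ≤ √(2 * π) := le_sqrt_of_sq_le (by nlinarith [pi_gt_three])
    have hc1 : 2 * c ^ 2 < 1 := by
      have : c < 1 / (2 * c) := by linarith
      rw [lt_div_iff₀ (by positivity)] at this; nlinarith
    have hexp : 1 - c ^ 2 / 2 ≤ exp (-c ^ 2 / 2) := by linarith [add_one_le_exp (-c ^ 2 / 2)]
    have hc58 : 5 / 8 ≤ c := by nlinarith
    have hinvc : 1 / (2 * c) ≤ 4 / 5 := by rw [div_le_iff₀ (by positivity)]; nlinarith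
    have hnum : -t / √(2 * π) ≤ -t / 2 := div_le_div_of_nonneg_left (by linarith) two_pos hπ
    nlinarith

theorem gaussianReal_Ioi_le_of_calibrated {ε δ r Δ σ : ℝ} (hε0 : 0 < ε) (hε1 : ε < 1) (hδ0 : 0 < δ)
    (hδ1 : δ < 1) (hr : 0 < r) (hrΔ : r ≤ Δ) (hσ0 : 0 < σ)
    (hσ : Δ * √(2 * log (1.25 / δ)) / ε ≤ σ) :
    gaussianReal 0 1 (Ioi (σ * ε / r - r / (2 * σ))) ≤ ENNReal.ofReal δ := by
  set c := √(2 * log (1.25 / δ))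
  have hlog := one_fifth_lt_log hδ0 hδ1
  have hc2 : c ^ 2 = 2 * log (1.25 / δ) := sq_sqrt (by linarith)
  have hc0 : 0 < c := sqrt_pos.2 (by linarith)
  have hδ : 5 / 4 * exp (-c ^ 2 / 2) = δ := by
    rw [hc2, show -(2 * log (1.25 / δ)) / 2 = -log (1.25 / δ) by ring, exp_neg,
      exp_log (by positivity)]
    field_simp
    norm_num
  have hcσ : r * c ≤ σ * ε := by
    rw [div_le_iff₀ hε0] at hσ
    nlinarith
  have ht : c - 1 / (2 * c) ≤ σ * ε / r - r / (2 * σ) := by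
    have h1 : c ≤ σ * ε / r := by rw [le_div_iff₀ hr]; linarith
    have h2 : r / (2 * σ) ≤ 1 / (2 * c) := by
      rw [div_le_div_iff₀ (by positivity) (by positivity)]; nlinarith
    linarith
  exact hδ ▸ gaussianReal_Ioi_le_of_sub_inv_le hc0 (by linarith) ht

/-- **Gaussian mechanism.** For `f : D → ℝ^k` with `L₂`-sensitivity `Δ`, the
mechanism `A(D) = f(D) + N(0, σ²I_k)` is `(ε, δ)`-differentially private for
`ε ∈ (0,1)` whenever `σ ≥ Δ · √(2 ln(1.25/δ))/ε`. -/
theorem gaussian_mechanism_privacy {D : Type*} {k : ℕ} (adj : D → D → Prop)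
    (f : D → Fin k → ℝ) (Δ ε δ σ : ℝ)
    (hsens : ∀ d₁ d₂, adj d₁ d₂ →
      Real.sqrt (∑ i, (f d₁ i - f d₂ i) ^ 2) ≤ Δ)
    (hε0 : 0 < ε) (hε1 : ε < 1) (hδ : 0 < δ)
    (hσ : Δ * Real.sqrt (2 * Real.log (1.25 / δ)) / ε ≤ σ) :
    DP adj
      (fun x => Measure.map (fun ν : Fin k → ℝ => fun i => f x i + ν i)
        (Measure.pi fun _ : Fin k => gaussianReal 0 ⟨σ ^ 2, sq_nonneg σ⟩))
      ε δ := by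
  obtain ⟨v, hv⟩ : ∃ v : ℝ≥0, v = ⟨σ ^ 2, sq_nonneg σ⟩ := ⟨_, rfl⟩
  have hvσ : (v : ℝ) = σ ^ 2 := by rw [hv]; rfl
  rw [← hv]
  simp only [map_add_pi_gaussianReal]
  refine DP.of_measure_le hδ.le fun d₁ d₂ hadj O hO => ?_
  rcases le_or_gt 1 δ with hδ1 | hδ1
  · calc _ ≤ 1 := prob_le_one
      _ ≤ ENNReal.ofReal δ := by rwa [← ENNReal.ofReal_one, ENNReal.ofReal_le_ofReal_iff hδ.le]
      _ ≤ _ := le_add_self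
  by_cases hf : f d₁ = f d₂
  · rw [hf]
    exact (le_mul_of_one_le_left' (by simpa using hε0.le)).trans le_self_add
  obtain ⟨j, hj⟩ := Function.ne_iff.1 hf
  set r := √(∑ i, (f d₁ i - f d₂ i) ^ 2)
  have hr : 0 < r := sqrt_pos.2 <| Finset.sum_pos' (fun i _ => sq_nonneg _)
    ⟨j, Finset.mem_univ j, pow_two_pos_of_ne_zero (sub_ne_zero.2 hj)⟩
  have hσ0 : 0 < σ := lt_of_lt_of_le (div_pos (mul_pos (hr.trans_le (hsens d₁ d₂ hadj))
    (sqrt_pos.2 (by linarith [one_fifth_lt_log hδ hδ1]))) hε0) hσ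
  have hloss := pi_gaussianReal_le_exp_mul_add (f d₁) (f d₂) ε hr (sq_sqrt (by positivity)).symm
    hσ0 hvσ hO
  have htail := gaussianReal_Ioi_le_of_calibrated hε0 hε1 hδ hδ1 hr (hsens d₁ d₂ hadj) hσ0 hσ
  exact hloss.trans (add_le_add_right htail _)
end
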